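/- arXiv:2005.00298 — 3 statements merged into one kernel-verified Lean document; each statement's English description precedes it below -/
import Mathlib

section
/- Let D be a chord diagram containing a strong RII pair α = {i, j+1}, β = {i+1, j} (where i, i+1, j, j+1 are distinct points in this cyclic order), let D' be obtained from D by deleting α and β, and let k be the number of chords of D crossing α. Then X(D) = X(D') + 2k. If moreover D is evenly interlaced, then k is even and hence X(D) ≡ X(D') (mod 4). (This is the paper's claim that one strong RII move changes ⊗ by 4m for some integer m.) -/
/-- A chord diagram on `2 * n` points: a fixed-point-free involution of `ZMod (2 * n)`.
Its two-element orbits are called chords; the points lie on a circle in their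
natural cyclic order. -/
structure ChordDiagram (n : ℕ) where
  inv : ZMod (2 * n) → ZMod (2 * n)
  involutive : Function.Involutive inv
  fixedPointFree : ∀ x, inv x ≠ x

/-- A chord: an unordered pair of points of the circle `ZMod m`. -/
abbrev Chord (m : ℕ) := Sym2 (ZMod m)

/-- `x` lies in the open cyclic arc running counterclockwise from `a` to `b`. -/
def InArc {m : ℕ} (a b x : ZMod m) : Prop :=
  0 < (x - a).val ∧ (x - a).val < (b - a).val

/-- Two chords cross: exactly one endpoint of the second lies in the open cyclic arc
bounded by the first. -/
def Chord.Crosses {m : ℕ} (e f : Chord m) : Prop :=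
  ∃ a b c d : ZMod m, e = s(a, b) ∧ f = s(c, d) ∧ Xor' (InArc a b c) (InArc a b d)

/-- The set of chords of a chord diagram. -/
def ChordDiagram.chords {n : ℕ} (D : ChordDiagram n) : Set (Chord (2 * n)) :=
  {e | ∃ x, e = s(x, D.inv x)}

/-- `P` is an (unordered) pair of crossing chords of `D`. -/
def ChordDiagram.IsCrossingPair {n : ℕ} (D : ChordDiagram n)
    (P : Finset (Chord (2 * n))) : Prop :=
  P.card = 2 ∧ (∀ e ∈ P, e ∈ D.chords) ∧
    ∀ e ∈ P, ∀ f ∈ P, e ≠ f → Chord.Crosses e f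

/-- `P` is an (unordered) triple of pairwise crossing chords of `D`. -/
def ChordDiagram.IsTripleChord {n : ℕ} (D : ChordDiagram n)
    (P : Finset (Chord (2 * n))) : Prop :=
  P.card = 3 ∧ (∀ e ∈ P, e ∈ D.chords) ∧
    ∀ e ∈ P, ∀ f ∈ P, e ≠ f → Chord.Crosses e f

/-- `P` is an H-triple of `D`: a triple `{a, b, c}` of chords of `D` such that `c`
crosses both `a` and `b` while `a` and `b` do not cross. -/
def ChordDiagram.IsHTriple {n : ℕ} (D : ChordDiagram n)
    (P : Finset (Chord (2 * n))) : Prop :=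
  P.card = 3 ∧ (∀ e ∈ P, e ∈ D.chords) ∧
    ∃ c ∈ P, (∀ e ∈ P, e ≠ c → Chord.Crosses c e) ∧
      ∀ a ∈ P, ∀ b ∈ P, a ≠ c → b ≠ c → a ≠ b → ¬ Chord.Crosses a b

/-- `X D`: the number of unordered pairs of chords of `D` that cross. -/
noncomputable def ChordDiagram.X {n : ℕ} (D : ChordDiagram n) : ℕ :=
  Set.ncard {P | D.IsCrossingPair P}

/-- `T D`: the number of unordered triples of chords of `D` that pairwise cross. -/
noncomputable def ChordDiagram.T {n : ℕ} (D : ChordDiagram n) : ℕ :=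
  Set.ncard {P | D.IsTripleChord P}

/-- `H D`: the number of H-triples of `D`. -/
noncomputable def ChordDiagram.H {n : ℕ} (D : ChordDiagram n) : ℕ :=
  Set.ncard {P | D.IsHTriple P}

/-- `D'` is obtained from `D` by deleting the set `S` of chords: deletion removes the
chords of `S` together with their endpoints and reindexes the remaining points
preserving their cyclic order; in particular it induces a bijection between the
remaining chords of `D` and the chords of `D'` preserving all crossing relations. -/
def ChordDiagram.DeletionOf {n n' : ℕ} (D : ChordDiagram n) (S : Set (Chord (2 * n)))
    (D' : ChordDiagram n') : Prop :=
  ∃ φ : {e : Chord (2 * n) // e ∈ D.chords ∧ e ∉ S} ≃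
      {e : Chord (2 * n') // e ∈ D'.chords},
    ∀ e f, Chord.Crosses e.1 f.1 ↔ Chord.Crosses (φ e).1 (φ f).1

/-- Four points occurring in this (strict counterclockwise) cyclic order;
in particular they are pairwise distinct. -/
def CyclicOrd4 {m : ℕ} (a b c d : ZMod m) : Prop :=
  0 < (b - a).val ∧ (b - a).val < (c - a).val ∧ (c - a).val < (d - a).val

/-- Six points occurring in this (strict counterclockwise) cyclic order;
in particular they are pairwise distinct. -/
def CyclicOrd6 {m : ℕ} (a b c d e f : ZMod m) : Prop :=
  0 < (b - a).val ∧ (b - a).val < (c - a).val ∧ (c - a).val < (d - a).val ∧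
    (d - a).val < (e - a).val ∧ (e - a).val < (f - a).val

/-- `D` is evenly interlaced: every chord of `D` crosses an even number of chords
of `D` (true for the Gauss diagram of every knot projection). -/
def ChordDiagram.EvenlyInterlaced {n : ℕ} (D : ChordDiagram n) : Prop :=
  ∀ e ∈ D.chords, Even (Set.ncard {f | f ∈ D.chords ∧ Chord.Crosses e f})

/-- Exactly two of the three propositions hold. -/
def ExactlyTwo (A B C : Prop) : Prop :=
  (A ∧ B ∧ ¬ C) ∨ (A ∧ ¬ B ∧ C) ∨ (¬ A ∧ B ∧ C)

/-- A strong RIII move: the three pairwise crossing chords `{p, q+1}`, `{q, r+1}`,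
`{r, p+1}` (where `p, p+1, q, q+1, r, r+1` occur in this cyclic order) are replaced by
the three chords `{p+1, q}`, `{q+1, r}`, `{r+1, p}`, all other chords being unchanged. -/
def ChordDiagram.StrongRIII {n : ℕ} (D D' : ChordDiagram n) : Prop :=
  ∃ p q r : ZMod (2 * n), CyclicOrd6 p (p + 1) q (q + 1) r (r + 1) ∧
    s(p, q + 1) ∈ D.chords ∧ s(q, r + 1) ∈ D.chords ∧ s(r, p + 1) ∈ D.chords ∧
    D'.chords = (D.chords \ {s(p, q + 1), s(q, r + 1), s(r, p + 1)}) ∪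
      {s(p + 1, q), s(q + 1, r), s(r + 1, p)}

/-!
Every crossing pair of `D` contains `α`, contains `β`, or avoids both. No pair contains both,
because the nested chords `α` and `β` do not cross, and the pairs avoiding both are the crossing
pairs of `D'`. The pairs through `α` correspond to the chords crossing `α`, and likewise for `β`;
these two sets of chords coincide, because the adjacent points `i, i + 1` (and `j, j + 1`) lie on
the same side of every other chord. Hence `X D = X D' + 2 k`.
-/

lemma ncard_pairwise_pairs_range {α β : Type*} {r : α → α → Prop} {s : β → β → Prop}
    (f : α ↪ β) (hf : ∀ a a', s (f a) (f a') ↔ r a a') :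
    {Q : Finset β | Q.card = 2 ∧ (∀ b ∈ Q, b ∈ Set.range f) ∧ (Q : Set β).Pairwise s}.ncard =
      {P : Finset α | P.card = 2 ∧ (P : Set α).Pairwise r}.ncard := by
  have hpairwise (P : Finset α) : (P.map f : Set β).Pairwise s ↔ (P : Set α).Pairwise r := by
    rw [Finset.coe_map, f.injective.injOn.pairwise_image]
    simp only [Set.Pairwise, Function.onFun, hf]
  convert Set.ncard_image_of_injective _ (Finset.map_injective f) using 2
  ext Q
  refine ⟨fun ⟨hcard, hrange, hQ⟩ => ?_, ?_⟩
  · obtain ⟨P, rfl⟩ : ∃ P : Finset α, P.map f = Q := by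
      refine ⟨Q.preimage f f.injective.injOn, Finset.ext fun b => ⟨fun hb => ?_, fun hb => ?_⟩⟩
      · obtain ⟨a, ha, rfl⟩ := Finset.mem_map.mp hb
        exact Finset.mem_preimage.mp ha
      · obtain ⟨a, rfl⟩ := hrange b hb
        exact Finset.mem_map_of_mem f (Finset.mem_preimage.mpr hb)
    exact ⟨P, ⟨by simpa using hcard, (hpairwise P).mp hQ⟩, rfl⟩
  · rintro ⟨P, ⟨hcard, hP⟩, rfl⟩
    exact ⟨by simpa using hcard, by simp, (hpairwise P).mpr hP⟩

section Arcs

variable {m : ℕ} [NeZero m]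

/-- Change of base point for offsets, as a disjunction that `omega` can use. -/
lemma val_sub_add_val_sub (a w x : ZMod m) :
    (x - w).val + (w - a).val = (x - a).val ∨ (x - w).val + (w - a).val = (x - a).val + m := by
  rw [← sub_add_sub_cancel x w a]
  by_cases h : (x - w).val + (w - a).val < m
  · exact .inl (ZMod.val_add_of_lt h).symm
  · exact .inr (ZMod.val_add_val_of_le (not_lt.mp h))

omit [NeZero m] in
lemma val_sub_pos {x a : ZMod m} (h : x ≠ a) : 0 < (x - a).val :=
  ZMod.val_pos.mpr (sub_ne_zero.mpr h)

lemma val_sub_ne {x y : ZMod m} (h : x ≠ y) (a : ZMod m) : (x - a).val ≠ (y - a).val :=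
  fun hv => h (sub_left_inj.mp (ZMod.val_injective m hv))

lemma inArc_swap_iff {a b x : ZMod m} (hab : a ≠ b) (hxa : x ≠ a) (hxb : x ≠ b) :
    InArc b a x ↔ ¬ InArc a b x := by
  have := val_sub_add_val_sub a b x
  have hba := val_sub_add_val_sub a b a
  rw [sub_self, ZMod.val_zero] at hba
  have := val_sub_pos hab.symm
  have := val_sub_pos hxa
  have := val_sub_pos hxb
  have := val_sub_ne hxb a
  have := ZMod.val_lt (x - a)
  have := ZMod.val_lt (x - b)
  unfold InArc
  omega

lemma inArc_add_one_iff {a b x : ZMod m} (hxa : x ≠ a) (hx1a : x + 1 ≠ a) (hx1b : x + 1 ≠ b) :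
    InArc a b (x + 1) ↔ InArc a b x := by
  have hm : m ≠ 1 := by rintro rfl; exact hxa (Subsingleton.elim _ _)
  have h1 : (x + 1 - x).val = 1 := by rw [add_sub_cancel_left]; exact ZMod.val_one'' hm
  have := val_sub_add_val_sub a x (x + 1)
  have := val_sub_pos hxa
  have := val_sub_pos hx1a
  have := val_sub_ne hx1b a
  have := ZMod.val_lt (x + 1 - a)
  have := ZMod.val_lt (x - a)
  unfold InArc
  omega

end Arcs

namespace Chord

lemma not_crosses_self {m : ℕ} (e : Chord m) : ¬ e.Crosses e := by
  rintro ⟨a, b, c, d, rfl, hcd, hx⟩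
  have ha : ¬ InArc a b a := by simp [InArc]
  have hb : ¬ InArc a b b := lt_irrefl _ ∘ And.right
  rcases Sym2.eq_iff.mp hcd with ⟨rfl, rfl⟩ | ⟨rfl, rfl⟩ <;>
    rcases hx with ⟨h, -⟩ | ⟨h, -⟩ <;> contradiction

lemma Crosses.ne {m : ℕ} {e f : Chord m} (h : e.Crosses f) : e ≠ f :=
  fun hef => not_crosses_self f (hef ▸ h)

variable {m : ℕ} [NeZero m]

lemma crosses_mk_iff {a b c d : ZMod m} (hab : a ≠ b) (hca : c ≠ a) (hcb : c ≠ b)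
    (hda : d ≠ a) (hdb : d ≠ b) :
    Crosses s(a, b) s(c, d) ↔ Xor (InArc a b c) (InArc a b d) := by
  refine ⟨?_, fun h => ⟨a, b, c, d, rfl, rfl, h⟩⟩
  rintro ⟨a', b', c', d', he, hf, hx⟩
  have hx : Xor (InArc a' b' c) (InArc a' b' d) := by
    rcases Sym2.eq_iff.mp hf with ⟨rfl, rfl⟩ | ⟨rfl, rfl⟩
    · exact hx
    · exact hx.symm
  rcases Sym2.eq_iff.mp he with ⟨rfl, rfl⟩ | ⟨rfl, rfl⟩
  · exact hx
  · rwa [inArc_swap_iff hab hca hcb, inArc_swap_iff hab hda hdb, xor_not_not] at hx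

lemma Crosses.symm {e f : Chord m} (he : ¬ e.IsDiag) (hf : ¬ f.IsDiag) (hef : ∀ x ∈ e, x ∉ f)
    (h : e.Crosses f) : f.Crosses e := by
  induction e using Sym2.ind with | _ a b => ?_
  induction f using Sym2.ind with | _ c d => ?_
  simp only [Sym2.mk_isDiag_iff, Sym2.mem_iff, forall_eq_or_imp, forall_eq, not_or] at he hf hef
  obtain ⟨⟨hac, had⟩, hbc, hbd⟩ := hef
  rw [crosses_mk_iff he (Ne.symm hac) (Ne.symm hbc) (Ne.symm had) (Ne.symm hbd)] at h
  rw [crosses_mk_iff hf hac had hbc hbd]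
  have hca := val_sub_add_val_sub a c a
  rw [sub_self, ZMod.val_zero] at hca
  have := val_sub_add_val_sub a c b
  have := val_sub_add_val_sub a c d
  have := val_sub_pos (Ne.symm he)
  have := val_sub_pos (Ne.symm hac)
  have := val_sub_pos (Ne.symm had)
  have := val_sub_ne (Ne.symm hbc) a
  have := val_sub_ne (Ne.symm hbd) a
  have := val_sub_ne hf a
  have := ZMod.val_lt (a - c)
  have := ZMod.val_lt (b - c)
  have := ZMod.val_lt (d - c)
  have := ZMod.val_lt (b - a)
  have := ZMod.val_lt (c - a)
  have := ZMod.val_lt (d - a)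
  simp only [xor_def, InArc] at h ⊢
  omega

end Chord

lemma CyclicOrd4.mk_ne {m : ℕ} {a b c d : ZMod m} (h : CyclicOrd4 a b c d) : s(a, d) ≠ s(b, c) := by
  obtain ⟨hb, hbc, -⟩ := h
  rw [Ne, Sym2.eq_iff]
  rintro (⟨rfl, -⟩ | ⟨rfl, -⟩) <;> simp_all

lemma CyclicOrd4.not_crosses {m : ℕ} [NeZero m] {a b c d : ZMod m} (h : CyclicOrd4 a b c d) :
    ¬ Chord.Crosses s(a, d) s(b, c) := by
  obtain ⟨hb, hbc, hcd⟩ := h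
  have hda : d ≠ a := by rintro rfl; simp at hcd
  have hba : b ≠ a := by rintro rfl; simp at hb
  have hca : c ≠ a := by rintro rfl; simp at hbc
  rw [Chord.crosses_mk_iff hda.symm hba (by rintro rfl; omega) hca (by rintro rfl; omega)]
  simp only [xor_def, InArc]
  omega

namespace ChordDiagram

variable {n : ℕ} {D : ChordDiagram n}

lemma eq_mk_inv_of_mem {e : Chord (2 * n)} (he : e ∈ D.chords) {x : ZMod (2 * n)} (hx : x ∈ e) :
    e = s(x, D.inv x) := by
  obtain ⟨z, rfl⟩ := he
  rcases Sym2.mem_iff.mp hx with rfl | rfl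
  · rfl
  · rw [D.involutive z, Sym2.eq_swap]

lemma eq_of_mem_of_mem {e f : Chord (2 * n)} (he : e ∈ D.chords) (hf : f ∈ D.chords)
    {x : ZMod (2 * n)} (hxe : x ∈ e) (hxf : x ∈ f) : e = f := by
  rw [eq_mk_inv_of_mem he hxe, eq_mk_inv_of_mem hf hxf]

lemma not_isDiag_of_mem {e : Chord (2 * n)} (he : e ∈ D.chords) : ¬ e.IsDiag := by
  obtain ⟨z, rfl⟩ := he
  exact Sym2.mk_isDiag_iff.not.mpr (D.fixedPointFree z).symm

def crossers (D : ChordDiagram n) (γ : Chord (2 * n)) : Set (Chord (2 * n)) :=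
  {e | e ∈ D.chords ∧ e.Crosses γ}

lemma DeletionOf.X_eq {n' : ℕ} {S : Set (Chord (2 * n))} {D' : ChordDiagram n'}
    (h : D.DeletionOf S D') :
    D'.X = {P | D.IsCrossingPair P ∧ ∀ e ∈ P, e ∉ S}.ncard := by
  obtain ⟨φ, hφ⟩ := h
  let r (e f : {e // e ∈ D.chords ∧ e ∉ S}) : Prop := e.1.Crosses f.1
  have hpairsD' := ncard_pairwise_pairs_range (r := r) (s := Chord.Crosses)
    (φ.toEmbedding.trans (Function.Embedding.subtype _)) fun e f => (hφ e f).symm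
  have hpairsD := ncard_pairwise_pairs_range (r := r) (s := Chord.Crosses)
    (Function.Embedding.subtype _) fun e f => Iff.rfl
  have hrange' : Set.range (φ.toEmbedding.trans (Function.Embedding.subtype _)) = D'.chords := by
    ext x
    exact ⟨fun ⟨e, he⟩ => he ▸ (φ e).2, fun hx => ⟨φ.symm ⟨x, hx⟩, by simp⟩⟩
  have hrange : Set.range (Function.Embedding.subtype fun e => e ∈ D.chords ∧ e ∉ S) =
      {e | e ∈ D.chords ∧ e ∉ S} := Subtype.range_coe
  rw [hrange', ← hpairsD, hrange] at hpairsD'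
  refine hpairsD'.trans (congrArg Set.ncard (Set.ext fun P => ?_))
  simp only [Set.mem_ofPred_eq, IsCrossingPair, forall_and]
  exact ⟨fun ⟨hc, ⟨hch, hS⟩, hx⟩ => ⟨⟨hc, hch, hx⟩, hS⟩,
    fun ⟨⟨hc, hch, hx⟩, hS⟩ => ⟨hc, ⟨hch, hS⟩, hx⟩⟩

variable [NeZero n]

lemma crosses_comm {e f : Chord (2 * n)} (he : e ∈ D.chords) (hf : f ∈ D.chords) :
    e.Crosses f ↔ f.Crosses e := by
  have symm {e f : Chord (2 * n)} (he : e ∈ D.chords) (hf : f ∈ D.chords) :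
      e.Crosses f → f.Crosses e := fun h =>
    h.symm (not_isDiag_of_mem he) (not_isDiag_of_mem hf)
      fun x hxe hxf => h.ne (eq_of_mem_of_mem he hf hxe hxf)
  exact ⟨symm he hf, symm hf he⟩

lemma isCrossingPair_pair_iff {e f : Chord (2 * n)} (he : e ∈ D.chords) (hf : f ∈ D.chords) :
    D.IsCrossingPair {e, f} ↔ e.Crosses f := by
  refine ⟨fun h => h.2.2 e (by simp) f (by simp) ?_, fun h => ⟨Finset.card_pair h.ne, ?_, ?_⟩⟩
  · rintro rfl
    simp [IsCrossingPair] at h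
  · simp [he, hf]
  · change Set.Pairwise (({e, f} : Finset (Chord (2 * n))) : Set (Chord (2 * n))) Chord.Crosses
    rw [Finset.coe_pair, Set.pairwise_pair]
    exact fun _ => ⟨h, (crosses_comm he hf).mp h⟩

lemma ncard_crossingPairs_mem {γ : Chord (2 * n)} (hγ : γ ∈ D.chords) :
    {P | D.IsCrossingPair P ∧ γ ∈ P}.ncard = (D.crossers γ).ncard := by
  have himage : {P | D.IsCrossingPair P ∧ γ ∈ P} = (fun e => {e, γ}) '' D.crossers γ := by
    ext P
    refine ⟨fun ⟨hP, hγP⟩ => ?_, ?_⟩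
    · obtain ⟨x, y, -, rfl⟩ := Finset.card_eq_two.mp hP.1
      have hx := hP.2.1 x (by simp)
      have hy := hP.2.1 y (by simp)
      rw [isCrossingPair_pair_iff hx hy] at hP
      rcases Finset.mem_insert.mp hγP with rfl | hγy
      · exact ⟨y, ⟨hy, (crosses_comm hx hy).mp hP⟩, Finset.pair_comm _ _⟩
      · rw [Finset.mem_singleton.mp hγy]
        exact ⟨x, ⟨hx, hP⟩, rfl⟩
    · rintro ⟨e, ⟨he, hc⟩, rfl⟩
      exact ⟨(isCrossingPair_pair_iff he hγ).mpr hc, by simp⟩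
  rw [himage, Set.InjOn.ncard_image]
  intro e₁ h₁ e₂ _ h
  exact (Finset.insert_inj (Finset.notMem_singleton.mpr h₁.2.ne)).mp h

lemma X_eq_of_not_crosses {α β : Chord (2 * n)} (hα : α ∈ D.chords) (hβ : β ∈ D.chords)
    (hne : α ≠ β) (hαβ : ¬ α.Crosses β) :
    D.X = (D.crossers α).ncard + (D.crossers β).ncard +
      {P | D.IsCrossingPair P ∧ ∀ e ∈ P, e ∉ ({α, β} : Set (Chord (2 * n)))}.ncard := by
  have hsplit : {P | D.IsCrossingPair P} =
      ({P | D.IsCrossingPair P ∧ α ∈ P} ∪ {P | D.IsCrossingPair P ∧ β ∈ P}) ∪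
        {P | D.IsCrossingPair P ∧ ∀ e ∈ P, e ∉ ({α, β} : Set (Chord (2 * n)))} := by
    ext P
    simp only [Set.mem_ofPred_eq, Set.mem_union, Set.mem_insert_iff, Set.mem_singleton_iff]
    grind
  have hdisj : Disjoint {P | D.IsCrossingPair P ∧ α ∈ P} {P | D.IsCrossingPair P ∧ β ∈ P} :=
    Set.disjoint_left.mpr fun P ⟨hP, hαP⟩ ⟨_, hβP⟩ => hαβ (hP.2.2 α hαP β hβP hne)
  have hdisj' : Disjoint ({P | D.IsCrossingPair P ∧ α ∈ P} ∪ {P | D.IsCrossingPair P ∧ β ∈ P})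
      {P | D.IsCrossingPair P ∧ ∀ e ∈ P, e ∉ ({α, β} : Set (Chord (2 * n)))} := by
    refine Set.disjoint_left.mpr fun P hP ⟨_, havoid⟩ => ?_
    rcases hP with ⟨_, hαP⟩ | ⟨_, hβP⟩
    · exact havoid α hαP (by simp)
    · exact havoid β hβP (by simp)
  rw [X, hsplit, Set.ncard_union_eq hdisj', Set.ncard_union_eq hdisj,
    ncard_crossingPairs_mem hα, ncard_crossingPairs_mem hβ]

lemma crossers_eq_of_parallel {i j : ZMod (2 * n)} (hα : s(i, j + 1) ∈ D.chords)
    (hβ : s(i + 1, j) ∈ D.chords) (hαβ : ¬ Chord.Crosses s(i, j + 1) s(i + 1, j)) :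
    D.crossers s(i + 1, j) = D.crossers s(i, j + 1) := by
  ext e
  refine and_congr_right fun he => ?_
  by_cases heα : e = s(i, j + 1)
  · subst heα
    exact iff_of_false hαβ (Chord.not_crosses_self _)
  by_cases heβ : e = s(i + 1, j)
  · subst heβ
    exact iff_of_false (Chord.not_crosses_self _) ((crosses_comm hα he).not.mp hαβ)
  induction e using Sym2.ind with | _ c d => ?_
  have hcd : c ≠ d := Sym2.mk_isDiag_iff.not.mp (not_isDiag_of_mem he)
  have hout (x) (hx : x ∈ s(c, d)) : x ∉ s(i, j + 1) ∧ x ∉ s(i + 1, j) :=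
    ⟨fun h => heα (eq_of_mem_of_mem he hα hx h), fun h => heβ (eq_of_mem_of_mem he hβ hx h)⟩
  simp only [Sym2.mem_iff, forall_eq_or_imp, forall_eq, not_or] at hout
  obtain ⟨⟨⟨hci, hcj1⟩, hci1, hcj⟩, ⟨hdi, hdj1⟩, hdi1, hdj⟩ := hout
  rw [Chord.crosses_mk_iff hcd (Ne.symm hci1) (Ne.symm hdi1) (Ne.symm hcj) (Ne.symm hdj),
    Chord.crosses_mk_iff hcd (Ne.symm hci) (Ne.symm hdi) (Ne.symm hcj1) (Ne.symm hdj1),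
    inArc_add_one_iff (Ne.symm hci) (Ne.symm hci1) (Ne.symm hdi1),
    inArc_add_one_iff (Ne.symm hcj) (Ne.symm hcj1) (Ne.symm hdj1)]

lemma EvenlyInterlaced.even_ncard_crossers (h : D.EvenlyInterlaced) {γ : Chord (2 * n)}
    (hγ : γ ∈ D.chords) : Even (D.crossers γ).ncard := by
  have hcrossers : D.crossers γ = {f | f ∈ D.chords ∧ γ.Crosses f} :=
    Set.ext fun f => and_congr_right fun hf => crosses_comm hf hγ
  rw [hcrossers]
  exact h γ hγ

end ChordDiagram

/-- deleting a strong RII pair `α = {i, j+1}`, `β = {i+1, j}` changes `X`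
by `2k`, where `k` is the number of chords of `D` crossing `α`; if `D` is evenly
interlaced then `k` is even, so `X(D) ≡ X(D') (mod 4)`. -/
theorem strong_RII_changes_X_by_4m (n : ℕ) (D : ChordDiagram (n + 2)) (D' : ChordDiagram n)
    (i j : ZMod (2 * (n + 2)))
    (hord : CyclicOrd4 i (i + 1) j (j + 1))
    (hα : s(i, j + 1) ∈ D.chords) (hβ : s(i + 1, j) ∈ D.chords)
    (hdel : D.DeletionOf {s(i, j + 1), s(i + 1, j)} D')
    (k : ℕ) (hk : k = Set.ncard {e | e ∈ D.chords ∧ Chord.Crosses e s(i, j + 1)}) :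
    D.X = D'.X + 2 * k ∧
      (D.EvenlyInterlaced → Even k ∧ D.X ≡ D'.X [MOD 4]) := by
  have hX := D.X_eq_of_not_crosses hα hβ hord.mk_ne hord.not_crosses
  rw [D.crossers_eq_of_parallel hα hβ hord.not_crosses, ← hdel.X_eq,
    show (D.crossers s(i, j + 1)).ncard = k from hk.symm] at hX
  refine ⟨by omega, fun hD => ?_⟩
  obtain ⟨t, ht⟩ : Even k := hk ▸ hD.even_ncard_crossers hα
  exact ⟨⟨t, ht⟩, by unfold Nat.ModEq; omega⟩
end

section
/- Let D be a chord diagram containing a weak RII pair α = {i, j}, β = {i+1, j+1} (where i, i+1, j, j+1 are distinct points in this cyclic order), and let D' be obtained from D by deleting α and β. Then no triple of chords counted by H(D) contains both α and β, and H(D) ≡ H(D') (mod 2). (This is the paper's claim that one weak RII move changes the H-chord count by an even number.) -/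
/-!
The chords `α = {i, j}` and `β = {i + 1, j + 1}` cross, and since no other chord has an endpoint
strictly between `i` and `i + 1` or between `j` and `j + 1`, every other chord crosses `α` exactly
when it crosses `β` (in either argument order): `α` and `β` are crossing twins. An H-triple
containing both would then either have a third chord distinguishing them, or have `α` and `β` as
its two non-crossing members; so none exists. Exchanging `α` and `β` is therefore a bijection
between the H-triples containing `α` and those containing `β`, whence
`H(D) = #(H-triples avoiding α, β) + 2 · #(H-triples containing α)`, and the first term is
`H(D')` because deletion preserves the crossing relation among the remaining chords.
-/

section HTriples

variable {ι κ : Type*}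

def IsHTripleRel (R : ι → ι → Prop) (P : Finset ι) : Prop :=
  P.card = 3 ∧ ∃ c ∈ P, (∀ e ∈ P, e ≠ c → R c e) ∧
    ∀ a ∈ P, ∀ b ∈ P, a ≠ c → b ≠ c → a ≠ b → ¬ R a b

def hTriples (R : ι → ι → Prop) (C : Set ι) : Set (Finset ι) :=
  {P | ↑P ⊆ C ∧ IsHTripleRel R P}

/-- Both argument orders are needed since `Chord.Crosses` is not symmetric on chords sharing an
endpoint. -/
def AreTwins (R : ι → ι → Prop) (C : Set ι) (α β : ι) : Prop :=
  ∀ γ ∈ C, γ ≠ α → γ ≠ β → (R α γ ↔ R β γ) ∧ (R γ α ↔ R γ β)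

variable {R : ι → ι → Prop} {R' : κ → κ → Prop} {C : Set ι} {α β : ι}

lemma AreTwins.symm (h : AreTwins R C α β) : AreTwins R C β α :=
  fun γ hγ hβ hα => ⟨(h γ hγ hα hβ).1.symm, (h γ hγ hα hβ).2.symm⟩

lemma isHTripleRel_map_iff (f : ι ↪ κ) {P : Finset ι}
    (hf : ∀ a ∈ P, ∀ b ∈ P, a ≠ b → (R' (f a) (f b) ↔ R a b)) :
    IsHTripleRel R' (P.map f) ↔ IsHTripleRel R P := by
  simp only [IsHTripleRel, Finset.card_map, Finset.mem_map, ne_eq, forall_exists_index, and_imp,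
    forall_apply_eq_imp_iff₂, exists_exists_and_eq_and, f.injective.eq_iff]
  refine and_congr_right fun _ => exists_congr fun c => and_congr_right fun hc => ?_
  refine and_congr (forall₂_congr fun e he => imp_congr_right fun hec => hf c hc e he ?_)
    (forall₂_congr fun a ha => forall₂_congr fun b hb => ?_)
  · exact Ne.symm hec
  · exact imp_congr_right fun _ => imp_congr_right fun _ => imp_congr_right fun hab =>
      not_congr (hf a ha b hb hab)

lemma ncard_hTriples_range (f : ι ↪ κ) (hf : ∀ a b, R' (f a) (f b) ↔ R a b) :
    (hTriples R' (Set.range f)).ncard = (hTriples R Set.univ).ncard := by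
  classical
  rw [← Set.ncard_image_of_injective _ (Finset.map_injective f)]
  congr 1
  ext Q
  constructor
  · rintro ⟨hQf, hQ⟩
    rw [← Set.image_univ] at hQf
    obtain ⟨P, -, rfl⟩ := Finset.subset_set_image_iff.1 hQf
    rw [← Finset.map_eq_image] at hQ ⊢
    exact ⟨P, ⟨Set.subset_univ _, (isHTripleRel_map_iff f fun a _ b _ _ => hf a b).1 hQ⟩, rfl⟩
  · rintro ⟨P, ⟨-, hP⟩, rfl⟩
    exact ⟨Finset.coe_map_subset_range f P, (isHTripleRel_map_iff f fun a _ b _ _ => hf a b).2 hP⟩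

lemma ncard_hTriples_congr {C' : Set κ} (φ : C ≃ C') (hφ : ∀ a b : C, R a b ↔ R' (φ a) (φ b)) :
    (hTriples R C).ncard = (hTriples R' C').ncard := by
  have hC := ncard_hTriples_range (R' := R) (R := fun a b : C => R a b)
    (Function.Embedding.subtype (· ∈ C)) fun _ _ => Iff.rfl
  have hC' := ncard_hTriples_range (R' := R') (R := fun a b : C => R a b)
    (φ.toEmbedding.trans (Function.Embedding.subtype (· ∈ C'))) fun a b => (hφ a b).symm
  rw [Function.Embedding.coe_subtype, Subtype.range_coe] at hC
  rw [Function.Embedding.coe_trans, Set.range_comp, Equiv.coe_toEmbedding, φ.range_eq_univ,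
    Set.image_univ, Function.Embedding.coe_subtype, Subtype.range_coe] at hC'
  rw [hC, hC']

lemma not_mem_and_mem_of_mem_hTriples (htw : AreTwins R C α β) (hne : α ≠ β) (hαβ : R α β)
    {P : Finset ι} (hP : P ∈ hTriples R C) : ¬(α ∈ P ∧ β ∈ P) := by
  classical
  rintro ⟨hα, hβ⟩
  obtain ⟨hPC, hcard, c, hc, hcR, hnR⟩ := hP
  obtain ⟨γ, hγ, hγβ⟩ := Finset.exists_mem_ne (s := P.erase α)
    (by rw [Finset.card_erase_of_mem hα, hcard]; decide) β
  obtain ⟨hγα, hγP⟩ := Finset.mem_erase.1 hγ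
  have htwγ := htw γ (hPC hγP) hγα hγβ
  by_cases hcα : c = α
  · subst hcα
    exact hnR β hβ γ hγP (Ne.symm hne) hγα (Ne.symm hγβ) (htwγ.1.1 (hcR γ hγP hγα))
  by_cases hcβ : c = β
  · subst hcβ
    exact hnR α hα γ hγP hne hγβ (Ne.symm hγα) (htwγ.1.2 (hcR γ hγP hγβ))
  exact hnR α hα β hβ (Ne.symm hcα) (Ne.symm hcβ) hne hαβ

variable [DecidableEq ι]

lemma isHTripleRel_map_swap_iff (htw : AreTwins R C α β) {P : Finset ι} (hPC : ↑P ⊆ C)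
    (hβ : β ∉ P) : IsHTripleRel R (P.map (Equiv.swap α β).toEmbedding) ↔ IsHTripleRel R P := by
  have hfix : ∀ x ∈ P, x ≠ α → Equiv.swap α β x = x := fun x hx hxα =>
    Equiv.swap_apply_of_ne_of_ne hxα (ne_of_mem_of_not_mem hx hβ)
  refine isHTripleRel_map_iff _ fun a ha b hb hab => ?_
  simp only [Equiv.coe_toEmbedding]
  by_cases haα : a = α
  · subst haα
    rw [Equiv.swap_apply_left, hfix b hb (Ne.symm hab)]
    exact (htw b (hPC hb) (Ne.symm hab) (ne_of_mem_of_not_mem hb hβ)).1.symm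
  by_cases hbα : b = α
  · subst hbα
    rw [Equiv.swap_apply_left, hfix a ha hab]
    exact (htw a (hPC ha) hab (ne_of_mem_of_not_mem ha hβ)).2.symm
  rw [hfix a ha haα, hfix b hb hbα]

lemma map_swap_mem_hTriples (htw : AreTwins R C α β) (hβC : β ∈ C) {P : Finset ι}
    (hP : P ∈ hTriples R C) (hα : α ∈ P) (hβ : β ∉ P) :
    P.map (Equiv.swap α β).toEmbedding ∈ hTriples R C ∧
      β ∈ P.map (Equiv.swap α β).toEmbedding := by
  refine ⟨⟨?_, (isHTripleRel_map_swap_iff htw hP.1 hβ).2 hP.2⟩, ?_⟩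
  · rw [Finset.coe_map]
    rintro _ ⟨x, hx, rfl⟩
    by_cases hxα : x = α
    · rw [hxα, Equiv.coe_toEmbedding, Equiv.swap_apply_left]
      exact hβC
    · rw [Equiv.coe_toEmbedding, Equiv.swap_apply_of_ne_of_ne hxα (ne_of_mem_of_not_mem hx hβ)]
      exact hP.1 hx
  · simpa using Finset.mem_map_of_mem (Equiv.swap α β).toEmbedding hα

end HTriples

section Count
variable {ι : Type*} [Finite ι] {R : ι → ι → Prop} {C : Set ι} {α β : ι}

lemma ncard_hTriples_eq_add_two_mul (hαC : α ∈ C) (hβC : β ∈ C) (hne : α ≠ β) (hαβ : R α β)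
    (htw : AreTwins R C α β) :
    (hTriples R C).ncard =
      (hTriples R (C \ {α, β})).ncard + 2 * {P ∈ hTriples R C | α ∈ P}.ncard := by
  classical
  set A := {P ∈ hTriples R C | α ∈ P}
  set B := {P ∈ hTriples R C | β ∈ P}
  have hnot := fun P (hP : P ∈ hTriples R C) => not_mem_and_mem_of_mem_hTriples htw hne hαβ hP
  have hsplit : hTriples R C = hTriples R (C \ {α, β}) ∪ (A ∪ B) := by
    ext P
    simp only [hTriples, A, B, Set.subset_sdiff, Set.disjoint_insert_right,
      Set.disjoint_singleton_right, Finset.mem_coe, Set.mem_union, Set.mem_ofPred_eq]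
    tauto
  have hdisj : Disjoint (hTriples R (C \ {α, β})) (A ∪ B) := by
    rw [Set.disjoint_left]
    rintro P ⟨hPC, -⟩ (⟨-, hP⟩ | ⟨-, hP⟩) <;> simpa using hPC hP
  have hAB : Disjoint A B :=
    Set.disjoint_left.2 fun P ⟨hP, hα⟩ ⟨_, hβ⟩ => hnot P hP ⟨hα, hβ⟩
  have hBA : B = Finset.map (Equiv.swap α β).toEmbedding '' A := by
    ext Q
    constructor
    · rintro ⟨hQ, hβQ⟩
      refine ⟨Q.map (Equiv.swap α β).toEmbedding, ?_, by ext; simp⟩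
      rw [Equiv.swap_comm]
      exact map_swap_mem_hTriples htw.symm hαC hQ hβQ fun hαQ => hnot Q hQ ⟨hαQ, hβQ⟩
    · rintro ⟨P, ⟨hP, hαP⟩, rfl⟩
      exact map_swap_mem_hTriples htw hβC hP hαP fun hβP => hnot P hP ⟨hαP, hβP⟩
  rw [hsplit, Set.ncard_union_eq hdisj, Set.ncard_union_eq hAB, hBA,
    Set.ncard_image_of_injective _ (Finset.map_injective _), two_mul]

end Count

namespace ZMod
variable {m : ℕ}

lemma val_sub_ne_zero {x a : ZMod m} (h : x ≠ a) : (x - a).val ≠ 0 := by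
  simpa [sub_eq_zero] using h

variable [NeZero m]

lemma val_sub_add_val (u k : ZMod m) :
    (u - k).val + k.val = u.val ∨ (u - k).val + k.val = u.val + m := by
  by_cases h : (u - k).val + k.val < m
  · left
    rw [← val_add_of_lt h, sub_add_cancel]
  · right
    rw [val_add_val_of_le (not_lt.1 h), sub_add_cancel]

lemma val_add_one_of_ne_zero {u : ZMod m} (h : u + 1 ≠ 0) : (u + 1).val = u.val + 1 := by
  have hm : m ≠ 1 := by rintro rfl; exact h (Subsingleton.elim _ _)
  have h0 : (u + 1).val ≠ 0 := by rwa [Ne, val_eq_zero]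
  have := u.val_lt
  rcases val_sub_add_val (u + 1) 1 with h' | h' <;>
    rw [add_sub_cancel_right, val_one'' hm] at h' <;> omega

lemma val_sub_ne_val_sub {x y a : ZMod m} (h : x ≠ y) : (x - a).val ≠ (y - a).val :=
  fun he => h (sub_left_injective (val_injective m he))

end ZMod

section Arcs
variable {m : ℕ}

lemma inArc_add_one_add_one_iff (a b x : ZMod m) :
    InArc (a + 1) (b + 1) (x + 1) ↔ InArc a b x := by
  simp only [InArc, add_sub_add_right_eq_sub]

lemma CyclicOrd4.crosses {a b c d : ZMod m} (h : CyclicOrd4 a b c d) :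
    Chord.Crosses s(a, c) s(b, d) :=
  ⟨a, c, b, d, rfl, rfl, Or.inl ⟨⟨h.1, h.2.1⟩, fun hd => (h.2.2.trans hd.2).false⟩⟩

lemma CyclicOrd4.sym2_ne {a b c d : ZMod m} (h : CyclicOrd4 a b c d) : s(a, c) ≠ s(b, d) := by
  obtain ⟨hb, -, hd⟩ := h
  rintro he
  rcases Sym2.eq_iff.1 he with ⟨rfl, -⟩ | ⟨rfl, -⟩ <;> simp at hb hd

variable [NeZero m]

lemma inArc_iff_not_inArc_swap {a b x : ZMod m} (hab : a ≠ b) (hxa : x ≠ a) (hxb : x ≠ b) :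
    InArc a b x ↔ ¬ InArc b a x := by
  have hu := ZMod.val_sub_ne_zero hxa
  have hk := ZMod.val_sub_ne_zero hab.symm
  have huk := ZMod.val_sub_ne_val_sub (a := a) hxb
  have hneg : (a - b).val = m - (b - a).val := by
    rw [← neg_sub, ZMod.neg_val, if_neg (sub_ne_zero.2 hab.symm)]
  have hx : x - b = (x - a) - (b - a) := by ring
  have := (x - a).val_lt
  have := ((x - a) - (b - a)).val_lt
  unfold InArc
  rw [hneg, hx]
  rcases ZMod.val_sub_add_val (x - a) (b - a) with h | h <;> omega

lemma crosses_mk_iff {a b c d : ZMod m} (hab : a ≠ b) (hca : c ≠ a) (hcb : c ≠ b)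
    (hda : d ≠ a) (hdb : d ≠ b) :
    Chord.Crosses s(a, b) s(c, d) ↔ Xor (InArc a b c) (InArc a b d) := by
  refine ⟨?_, fun hx => ⟨a, b, c, d, rfl, rfl, hx⟩⟩
  rintro ⟨a', b', c', d', he, hf, hx⟩
  rcases Sym2.eq_iff.1 he with ⟨rfl, rfl⟩ | ⟨rfl, rfl⟩ <;>
    rcases Sym2.eq_iff.1 hf with ⟨rfl, rfl⟩ | ⟨rfl, rfl⟩
  · exact hx
  · exact xor_comm _ _ |>.mp hx
  · rw [inArc_iff_not_inArc_swap hab.symm hcb hca, inArc_iff_not_inArc_swap hab.symm hdb hda] at hx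
    exact xor_not_not.1 hx
  · rw [inArc_iff_not_inArc_swap hab.symm hdb hda, inArc_iff_not_inArc_swap hab.symm hcb hca] at hx
    exact xor_not_not.1 (xor_comm _ _ |>.mp hx)

lemma inArc_add_one_iff_s7 {c d x : ZMod m} (hc : x ≠ c) (hc' : x + 1 ≠ c) (hd' : x + 1 ≠ d) :
    InArc c d (x + 1) ↔ InArc c d x := by
  have hval : (x + 1 - c).val = (x - c).val + 1 := by
    rw [add_sub_right_comm]
    exact ZMod.val_add_one_of_ne_zero (by rwa [← add_sub_right_comm, sub_ne_zero])
  have h0 := ZMod.val_sub_ne_zero hc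
  have hd := ZMod.val_sub_ne_val_sub (a := c) hd'
  unfold InArc
  omega

lemma inArc_add_one_add_one_iff_of_ne {a b x : ZMod m} (hxa : x ≠ a) (hxa' : x ≠ a + 1)
    (hxb : x ≠ b) : InArc (a + 1) (b + 1) x ↔ InArc a b x := by
  obtain ⟨y, rfl⟩ : ∃ y, x = y + 1 := ⟨x - 1, by ring⟩
  rw [inArc_add_one_add_one_iff, inArc_add_one_iff_s7 (fun h => hxa' (by rw [h])) hxa hxb]

lemma crosses_add_one_add_one_iff {a b x y : ZMod m} (hab : a ≠ b) (hxy : x ≠ y)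
    (hx : x ≠ a ∧ x ≠ b) (hx' : x ≠ a + 1 ∧ x ≠ b + 1)
    (hy : y ≠ a ∧ y ≠ b) (hy' : y ≠ a + 1 ∧ y ≠ b + 1) :
    (Chord.Crosses s(a + 1, b + 1) s(x, y) ↔ Chord.Crosses s(a, b) s(x, y)) ∧
      (Chord.Crosses s(x, y) s(a + 1, b + 1) ↔ Chord.Crosses s(x, y) s(a, b)) := by
  have hab' : a + 1 ≠ b + 1 := fun h => hab (add_right_cancel h)
  constructor
  · rw [crosses_mk_iff hab' hx'.1 hx'.2 hy'.1 hy'.2, crosses_mk_iff hab hx.1 hx.2 hy.1 hy.2,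
      inArc_add_one_add_one_iff_of_ne hx.1 hx'.1 hx.2,
      inArc_add_one_add_one_iff_of_ne hy.1 hy'.1 hy.2]
  · rw [crosses_mk_iff hxy (Ne.symm hx'.1) (Ne.symm hy'.1) (Ne.symm hx'.2) (Ne.symm hy'.2),
      crosses_mk_iff hxy (Ne.symm hx.1) (Ne.symm hy.1) (Ne.symm hx.2) (Ne.symm hy.2),
      inArc_add_one_iff_s7 (Ne.symm hx.1) (Ne.symm hx'.1) (Ne.symm hy'.1),
      inArc_add_one_iff_s7 (Ne.symm hx.2) (Ne.symm hx'.2) (Ne.symm hy'.2)]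

end Arcs

namespace ChordDiagram
variable {n : ℕ} {D : ChordDiagram n} {a b x y : ZMod (2 * n)}

lemma mem_chords_iff : s(a, b) ∈ D.chords ↔ D.inv a = b := by
  refine ⟨fun ⟨z, hz⟩ => ?_, fun h => ⟨a, by rw [h]⟩⟩
  rcases Sym2.eq_iff.1 hz with ⟨rfl, rfl⟩ | ⟨rfl, rfl⟩
  · rfl
  · exact D.involutive _

lemma ne_of_mem_chords (h : s(a, b) ∈ D.chords) : a ≠ b := by
  rintro rfl
  exact D.fixedPointFree a (mem_chords_iff.1 h)

lemma left_ne_of_mem_chords (hab : s(a, b) ∈ D.chords) (hxy : s(x, y) ∈ D.chords)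
    (hne : s(x, y) ≠ s(a, b)) : x ≠ a := by
  rintro rfl
  rw [mem_chords_iff] at hab hxy
  exact hne (by rw [← hab, ← hxy])

lemma endpoints_ne_of_mem_chords (hab : s(a, b) ∈ D.chords) (hxy : s(x, y) ∈ D.chords)
    (hne : s(x, y) ≠ s(a, b)) : (x ≠ a ∧ x ≠ b) ∧ (y ≠ a ∧ y ≠ b) := by
  have hba : s(b, a) ∈ D.chords := Sym2.eq_swap (a := a) ▸ hab
  have hyx : s(y, x) ∈ D.chords := Sym2.eq_swap (a := x) ▸ hxy
  refine ⟨⟨left_ne_of_mem_chords hab hxy hne, left_ne_of_mem_chords hba hxy ?_⟩,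
    left_ne_of_mem_chords hab hyx ?_, left_ne_of_mem_chords hba hyx ?_⟩ <;>
    simpa only [Sym2.eq_swap] using hne

lemma areTwins_add_one_add_one [NeZero n] (hα : s(a, b) ∈ D.chords)
    (hβ : s(a + 1, b + 1) ∈ D.chords) :
    AreTwins Chord.Crosses D.chords s(a, b) s(a + 1, b + 1) := by
  rintro γ ⟨x, rfl⟩ hγα hγβ
  have hγ : s(x, D.inv x) ∈ D.chords := ⟨x, rfl⟩
  obtain ⟨hx, hy⟩ := endpoints_ne_of_mem_chords hα hγ hγα
  obtain ⟨hx', hy'⟩ := endpoints_ne_of_mem_chords hβ hγ hγβ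
  obtain ⟨h₁, h₂⟩ := crosses_add_one_add_one_iff (ne_of_mem_chords hα) (ne_of_mem_chords hγ)
    hx hx' hy hy'
  exact ⟨h₁.symm, h₂.symm⟩

lemma isHTriple_iff {P : Finset (Chord (2 * n))} :
    D.IsHTriple P ↔ P ∈ hTriples Chord.Crosses D.chords := by
  simp only [IsHTriple, hTriples, IsHTripleRel, Set.mem_ofPred_eq]
  exact ⟨fun ⟨h₁, h₂, h₃⟩ => ⟨h₂, h₁, h₃⟩, fun ⟨h₂, h₁, h₃⟩ => ⟨h₁, h₂, h₃⟩⟩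

lemma H_eq_ncard_hTriples : D.H = (hTriples Chord.Crosses D.chords).ncard := by
  rw [H]
  congr 1
  ext P
  exact isHTriple_iff

end ChordDiagram

/-- for a weak RII pair `α = {i, j}`, `β = {i+1, j+1}`, no H-triple of `D`
contains both `α` and `β`, and deleting `α` and `β` changes the H-chord count by an
even number. -/
theorem weak_RII_changes_H_by_even (n : ℕ) (D : ChordDiagram (n + 2)) (D' : ChordDiagram n)
    (i j : ZMod (2 * (n + 2)))
    (hord : CyclicOrd4 i (i + 1) j (j + 1))
    (hα : s(i, j) ∈ D.chords) (hβ : s(i + 1, j + 1) ∈ D.chords)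
    (hdel : D.DeletionOf {s(i, j), s(i + 1, j + 1)} D') :
    (∀ P : Finset (Chord (2 * (n + 2))), D.IsHTriple P →
        ¬ (s(i, j) ∈ P ∧ s(i + 1, j + 1) ∈ P)) ∧
      D.H ≡ D'.H [MOD 2] := by
  obtain ⟨φ, hφ⟩ := hdel
  have hne := hord.sym2_ne
  have hcross := hord.crosses
  have htw := D.areTwins_add_one_add_one hα hβ
  refine ⟨fun P hP => not_mem_and_mem_of_mem_hTriples htw hne hcross
    (ChordDiagram.isHTriple_iff.1 hP), ?_⟩
  have hH' : D'.H = (hTriples Chord.Crosses (D.chords \ {s(i, j), s(i + 1, j + 1)})).ncard := by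
    rw [D'.H_eq_ncard_hTriples]
    exact (ncard_hTriples_congr φ hφ).symm
  rw [Nat.ModEq, D.H_eq_ncard_hTriples, hH',
    ncard_hTriples_eq_add_two_mul hα hβ hne hcross htw]
  omega
end

section
/- For an integer m ≥ 1, let D_m be the chord diagram on ZMod (2m) whose chords are {j, j+m} for 0 ≤ j < m (the Gauss diagram of the (2, m)-torus knot projection). Then any two distinct chords of D_m cross, so X(D_m) = m(m−1)/2 and T(D_m) = binomial(m, 3), while H(D_m) = 0; hence 3·H(D_m) − 3·T(D_m) + X(D_m) = m(m−1)(3−m)/2. In particular, for odd m = 2i+1 this value equals 2i(2i+1)(1−i), which is divisible by 4, so λ(D_{2i+1}) = i(2i+1)(1−i)/2. -/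
/-!
The chords of `D_m` are the `m` diameters `{x, x + m}` of the circle of `2m` points, and two
distinct diameters always cross: `c` and `c + m` lie on opposite half-circles cut out by
`{a, a + m}`. Hence every pair and every triple of chords is counted by `X` and `T`, none by
`H`, and `X = C(m, 2)`, `T = C(m, 3)`; the rest is arithmetic, where divisibility by `4` for
`m = 2i + 1` comes from the evenness of `i(i - 1)`.
-/

lemma two_mul_choose_two (n : ℕ) : 2 * (n.choose 2 : ℤ) = n * (n - 1) := by
  induction n with
  | zero => simp
  | succ k ih =>
    rw [Nat.choose_succ_succ, Nat.choose_one_right]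
    push_cast at ih ⊢
    linear_combination ih

lemma six_mul_choose_three (n : ℕ) : 6 * (n.choose 3 : ℤ) = n * (n - 1) * (n - 2) := by
  induction n with
  | zero => simp
  | succ k ih =>
    rw [Nat.choose_succ_succ]
    push_cast at ih ⊢
    linear_combination ih + 3 * two_mul_choose_two k

lemma Set.Finite.ncard_setOf_finset_subset_card {α : Type*} {s : Set α} (hs : s.Finite)
    (k : ℕ) : {P : Finset α | ↑P ⊆ s ∧ P.card = k}.ncard = s.ncard.choose k := by
  have hP : {P : Finset α | ↑P ⊆ s ∧ P.card = k} = ↑(hs.toFinset.powersetCard k) := by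
    ext P
    simp
  rw [hP, Set.ncard_coe_finset, Finset.card_powersetCard, Set.ncard_eq_toFinset_card s hs]

theorem Chord.crosses_antipodal {m : ℕ} [NeZero m] {a c : ZMod (2 * m)} (hca : c ≠ a)
    (hcam : c ≠ a + m) : Chord.Crosses s(a, a + m) s(c, c + m) := by
  refine ⟨a, a + m, c, c + m, rfl, rfl, ?_⟩
  have hm : (m : ZMod (2 * m)).val = m := ZMod.val_natCast_of_lt (by have := NeZero.pos m; omega)
  have ht0 : (c - a).val ≠ 0 := by
    rwa [Ne, ZMod.val_eq_zero, sub_eq_zero]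
  have htm : (c - a).val ≠ m := by
    intro h
    exact hcam (eq_add_of_sub_eq' (ZMod.val_injective _ (h.trans hm.symm)))
  have ht : (c - a).val < 2 * m := ZMod.val_lt _
  rw [InArc, InArc, add_sub_cancel_left, hm, show c + m - a = c - a + m by ring]
  rcases lt_or_gt_of_ne htm with hlt | hgt
  · rw [ZMod.val_add_of_lt (by omega), hm]
    exact Or.inl ⟨⟨by omega, hlt⟩, by omega⟩
  · rw [ZMod.val_add_of_le (by omega), hm]
    exact Or.inr ⟨⟨by omega, by omega⟩, by omega⟩

namespace ChordDiagram

variable {n : ℕ} (D : ChordDiagram n)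

lemma chord_eq_chord_iff {x y : ZMod (2 * n)} :
    s(y, D.inv y) = s(x, D.inv x) ↔ y = x ∨ y = D.inv x := by
  rw [Sym2.eq_iff]
  constructor
  · rintro (⟨h, -⟩ | ⟨h, -⟩)
    · exact Or.inl h
    · exact Or.inr h
  · rintro (rfl | rfl)
    · exact Or.inl ⟨rfl, rfl⟩
    · exact Or.inr ⟨rfl, D.involutive x⟩

/-- Each chord accounts for exactly two of the `2 * n` points. -/
theorem ncard_chords [NeZero n] : D.chords.ncard = n := by
  classical
  set f : ZMod (2 * n) → Chord (2 * n) := fun x => s(x, D.inv x)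
  have hchords : D.chords = ↑(Finset.univ.image f) := by
    ext e
    simp [chords, f, eq_comm]
  have hfiber : ∀ e ∈ Finset.univ.image f, (Finset.univ.filter (f · = e)).card = 2 := by
    intro e he
    obtain ⟨x, -, rfl⟩ := Finset.mem_image.mp he
    have hx : Finset.univ.filter (f · = f x) = {x, D.inv x} := by
      ext y
      simp [f, D.chord_eq_chord_iff]
    rw [hx, Finset.card_pair (D.fixedPointFree x).symm]
  have hcount := Finset.card_eq_sum_card_image f Finset.univ
  rw [Finset.card_univ, ZMod.card, Finset.sum_congr rfl hfiber, Finset.sum_const,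
    smul_eq_mul] at hcount
  rw [hchords, Set.ncard_coe_finset]
  omega

lemma chords_finite [NeZero n] : D.chords.Finite :=
  Set.finite_of_ncard_pos (by rw [D.ncard_chords]; exact NeZero.pos n)

section PairwiseCrossing

variable {D} (hD : D.chords.Pairwise Chord.Crosses)
include hD

lemma isCrossingPair_iff {P : Finset (Chord (2 * n))} :
    D.IsCrossingPair P ↔ ↑P ⊆ D.chords ∧ P.card = 2 :=
  ⟨fun ⟨hcard, hsub, _⟩ => ⟨hsub, hcard⟩,
    fun ⟨hsub, hcard⟩ => ⟨hcard, hsub, fun _ he _ hf => hD (hsub he) (hsub hf)⟩⟩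

lemma isTripleChord_iff {P : Finset (Chord (2 * n))} :
    D.IsTripleChord P ↔ ↑P ⊆ D.chords ∧ P.card = 3 :=
  ⟨fun ⟨hcard, hsub, _⟩ => ⟨hsub, hcard⟩,
    fun ⟨hsub, hcard⟩ => ⟨hcard, hsub, fun _ he _ hf => hD (hsub he) (hsub hf)⟩⟩

lemma not_isHTriple (P : Finset (Chord (2 * n))) : ¬ D.IsHTriple P := by
  rintro ⟨hcard, hsub, c, hc, -, hnot⟩
  obtain ⟨a, b, hab, hP⟩ : ∃ a b, a ≠ b ∧ P.erase c = {a, b} :=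
    Finset.card_eq_two.mp (by rw [Finset.card_erase_of_mem hc, hcard])
  have ha : a ∈ P.erase c := by simp [hP]
  have hb : b ∈ P.erase c := by simp [hP]
  have haP := Finset.mem_of_mem_erase ha
  have hbP := Finset.mem_of_mem_erase hb
  exact hnot a haP b hbP (Finset.ne_of_mem_erase ha) (Finset.ne_of_mem_erase hb) hab
    (hD (hsub a haP) (hsub b hbP) hab)

theorem H_eq_zero : D.H = 0 := by
  simp [H, not_isHTriple hD]

variable [NeZero n]

theorem X_eq_choose_two : D.X = n.choose 2 := by
  simp only [X, isCrossingPair_iff hD]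
  rw [D.chords_finite.ncard_setOf_finset_subset_card, D.ncard_chords]

theorem T_eq_choose_three : D.T = n.choose 3 := by
  simp only [T, isTripleChord_iff hD]
  rw [D.chords_finite.ncard_setOf_finset_subset_card, D.ncard_chords]

end PairwiseCrossing

theorem pairwise_crosses_of_inv_eq_add_half {m : ℕ} [NeZero m] {D : ChordDiagram m}
    (hD : ∀ x, D.inv x = x + (m : ZMod (2 * m))) : D.chords.Pairwise Chord.Crosses := by
  rintro _ ⟨x, rfl⟩ _ ⟨y, rfl⟩ hxy
  have hne : ¬ (y = x ∨ y = D.inv x) := fun h => hxy (D.chord_eq_chord_iff.mpr h).symm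
  rw [hD, not_or] at hne
  simpa only [hD] using Chord.crosses_antipodal hne.1 hne.2

end ChordDiagram

theorem torus_knot_projection_counts_general (m : ℕ) (D : ChordDiagram m)
    (hD : ∀ x : ZMod (2 * m), D.inv x = x + (m : ZMod (2 * m))) :
    (∀ e ∈ D.chords, ∀ f ∈ D.chords, e ≠ f → Chord.Crosses e f) ∧
      D.X = m * (m - 1) / 2 ∧
      D.T = Nat.choose m 3 ∧
      D.H = 0 ∧
      2 * (3 * (D.H : ℤ) - 3 * (D.T : ℤ) + (D.X : ℤ)) =
        (m : ℤ) * ((m : ℤ) - 1) * (3 - (m : ℤ)) ∧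
      ∀ i : ℕ, m = 2 * i + 1 →
        (3 * (D.H : ℤ) - 3 * (D.T : ℤ) + (D.X : ℤ) =
            2 * (i : ℤ) * (2 * (i : ℤ) + 1) * (1 - (i : ℤ))) ∧
          ∃ lam : ℤ, 3 * (D.H : ℤ) - 3 * (D.T : ℤ) + (D.X : ℤ) = 4 * lam ∧
            2 * lam = (i : ℤ) * (2 * (i : ℤ) + 1) * (1 - (i : ℤ)) := by
  have : NeZero m := ⟨by
    -- for `m = 0` the involution `x ↦ x + 0` would fix every point
    rintro rfl
    exact D.fixedPointFree 0 (by simp [hD])⟩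
  have hcross := ChordDiagram.pairwise_crosses_of_inv_eq_add_half hD
  have hX := ChordDiagram.X_eq_choose_two hcross
  have hT := ChordDiagram.T_eq_choose_three hcross
  have hH := ChordDiagram.H_eq_zero hcross
  have hsum : 2 * (3 * (D.H : ℤ) - 3 * (D.T : ℤ) + (D.X : ℤ)) =
      (m : ℤ) * ((m : ℤ) - 1) * (3 - (m : ℤ)) := by
    rw [hH, hX, hT]
    push_cast
    linear_combination two_mul_choose_two m - six_mul_choose_three m
  refine ⟨hcross, hX.trans (Nat.choose_two_right m), hT, hH, hsum, fun i hi => ?_⟩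
  have hodd : 3 * (D.H : ℤ) - 3 * (D.T : ℤ) + (D.X : ℤ) =
      2 * (i : ℤ) * (2 * (i : ℤ) + 1) * (1 - (i : ℤ)) := by
    rw [show (m : ℤ) = 2 * i + 1 by exact_mod_cast hi] at hsum
    refine mul_left_cancel₀ two_ne_zero (hsum.trans ?_)
    ring
  obtain ⟨k, hk⟩ := Int.even_mul_pred_self i
  refine ⟨hodd, -k * (2 * i + 1), ?_, ?_⟩
  · linear_combination hodd - 2 * (2 * (i : ℤ) + 1) * hk
  · linear_combination (2 * (i : ℤ) + 1) * hk

/-- for `m ≥ 1`, the chord diagram `D_m` on `ZMod (2m)` whose chords are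
`{j, j+m}` (the Gauss diagram of the `(2, m)`-torus knot projection, encoded by the
involution `x ↦ x + m`) has all chords pairwise crossing, so `X(D_m) = m(m−1)/2`,
`T(D_m) = C(m,3)`, `H(D_m) = 0`, hence `3H − 3T + X = m(m−1)(3−m)/2`; for odd
`m = 2i+1` this equals `2i(2i+1)(1−i)`, which is divisible by `4`, and
`λ(D_{2i+1}) = i(2i+1)(1−i)/2`. -/
theorem torus_knot_projection_counts (m : ℕ) (hm : 1 ≤ m) (D : ChordDiagram m)
    (hD : ∀ x : ZMod (2 * m), D.inv x = x + (m : ZMod (2 * m))) :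
    (∀ e ∈ D.chords, ∀ f ∈ D.chords, e ≠ f → Chord.Crosses e f) ∧
      D.X = m * (m - 1) / 2 ∧
      D.T = Nat.choose m 3 ∧
      D.H = 0 ∧
      2 * (3 * (D.H : ℤ) - 3 * (D.T : ℤ) + (D.X : ℤ)) =
        (m : ℤ) * ((m : ℤ) - 1) * (3 - (m : ℤ)) ∧
      ∀ i : ℕ, m = 2 * i + 1 →
        (3 * (D.H : ℤ) - 3 * (D.T : ℤ) + (D.X : ℤ) =
            2 * (i : ℤ) * (2 * (i : ℤ) + 1) * (1 - (i : ℤ))) ∧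
          ∃ lam : ℤ, 3 * (D.H : ℤ) - 3 * (D.T : ℤ) + (D.X : ℤ) = 4 * lam ∧
            2 * lam = (i : ℤ) * (2 * (i : ℤ) + 1) * (1 - (i : ℤ)) :=
  torus_knot_projection_counts_general m D hD
end
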